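/- arXiv:2602.23966 — 3 statements merged into one kernel-verified Lean document; each statement's English description precedes it below -/
import Mathlib

section
/- Let K be a field, let n ≥ 1 and m ≥ 1 be integers, and let P₁,…,P_k (with k ≥ 1) be distinct points of the projective space ℙⁿ over K. If P₁,…,P_k satisfy the Cayley–Bacharach condition with respect to homogeneous forms of degree m, then k ≥ m + 2. -/
/-!
If `k ≤ m + 1`, the Cayley–Bacharach condition fails at `P₁`: for each of the other `k - 1 ≤ m`
points there is a linear form vanishing there but not at `P₁` (the points are not proportional),
and the product of these forms, padded to degree `m` by a power of a linear form not vanishing at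
`P₁`, is a form of degree `m` vanishing at every point except `P₁`.
-/

open Finset MvPolynomial Matrix

section

variable {K σ : Type*} [Field K] [Fintype σ] [DecidableEq σ]

theorem MvPolynomial.exists_isHomogeneous_one_eval_eq_zero_and_ne_zero {x y : σ → K}
    (hxy : ∀ c : K, x ≠ c • y) :
    ∃ L : MvPolynomial σ K, L.IsHomogeneous 1 ∧ eval y L = 0 ∧ eval x L ≠ 0 := by
  have hx : x ∉ K ∙ y := by
    rw [Submodule.mem_span_singleton]
    rintro ⟨c, rfl⟩
    exact hxy c rfl
  obtain ⟨f, hfx, hfy⟩ := Submodule.exists_dual_map_eq_bot_of_notMem hx inferInstance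
  have hf : ∀ w, eval w ((replicateRow Unit ((dotProductEquiv K σ).symm f)).toMvPolynomial ()) =
      f w := fun w => by
    rw [toMvPolynomial_eval_eq_apply, replicateRow_mulVec_eq_const, Function.const_apply,
      ← dotProductEquiv_apply_apply, LinearEquiv.apply_symm_apply]
  refine ⟨_, toMvPolynomial_isHomogeneous _ _, ?_, by rwa [hf]⟩
  rw [hf, ← Submodule.mem_bot K, ← hfy]
  exact Submodule.mem_map_of_mem (Submodule.mem_span_singleton_self y)

theorem MvPolynomial.exists_isHomogeneous_eval_eq_zero_and_ne_zero {ι : Type*} (s : Finset ι)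
    (p : ι → σ → K) {x : σ → K} (hx : x ≠ 0) (hxp : ∀ j ∈ s, ∀ c : K, x ≠ c • p j)
    {m : ℕ} (hs : #s ≤ m) :
    ∃ F : MvPolynomial σ K, F.IsHomogeneous m ∧ (∀ j ∈ s, eval (p j) F = 0) ∧ eval x F ≠ 0 := by
  classical
  induction s using Finset.induction_on generalizing m with
  | empty =>
    obtain ⟨L, hL, -, hLx⟩ :=
      exists_isHomogeneous_one_eval_eq_zero_and_ne_zero (x := x) (y := 0) (by simpa using hx)
    exact ⟨L ^ m, by simpa using hL.pow m, by simp, by rw [map_pow]; exact pow_ne_zero m hLx⟩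
  | insert j s hj ih =>
    rw [card_insert_of_notMem hj] at hs
    obtain ⟨m, rfl⟩ : ∃ m', m = m' + 1 := Nat.exists_eq_add_one.mpr (by omega)
    obtain ⟨F, hF, hFs, hFx⟩ := ih (fun i hi => hxp i (mem_insert_of_mem hi)) (m := m) (by omega)
    obtain ⟨L, hL, hLj, hLx⟩ :=
      exists_isHomogeneous_one_eval_eq_zero_and_ne_zero (hxp j (mem_insert_self j s))
    refine ⟨L * F, by simpa [add_comm] using hL.mul hF, ?_, by simp [hLx, hFx]⟩
    simp +contextual [hLj, hFs]

end

theorem cayley_bacharach_count_bound_general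
    (K : Type*) [Field K] (n m k : ℕ) (hk : 1 ≤ k)
    (v : Fin k → (Fin (n + 1) → K))
    (hv0 : ∀ i, v i ≠ 0)
    (hdist : ∀ i j, i ≠ j → ∀ c : K, v j ≠ c • v i)
    (hCB : ∀ F : MvPolynomial (Fin (n + 1)) K, F.IsHomogeneous m →
      ∀ i : Fin k, (∀ j, j ≠ i → MvPolynomial.eval (v j) F = 0) →
        MvPolynomial.eval (v i) F = 0) :
    k ≥ m + 2 := by
  by_contra! hkm
  let i₀ : Fin k := ⟨0, hk⟩
  have hcard : #(univ.erase i₀) ≤ m := by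
    rw [card_erase_of_mem (mem_univ i₀), card_univ, Fintype.card_fin]
    omega
  obtain ⟨F, hF, hFv, hFi₀⟩ := exists_isHomogeneous_eval_eq_zero_and_ne_zero (univ.erase i₀) v
    (hv0 i₀) (fun j hj => hdist j i₀ (ne_of_mem_erase hj)) hcard
  exact hFi₀ (hCB F hF i₀ fun j hj => hFv j (mem_erase.mpr ⟨hj, mem_univ j⟩))

/-- **Cayley–Bacharach count bound in projective space.**
Points of ℙⁿ over a field `K` are represented by nonzero, pairwise non-proportional
vectors of `K^{n+1}`.  If `k ≥ 1` distinct points satisfy the Cayley–Bacharach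
condition with respect to homogeneous forms of degree `m ≥ 1`, then `k ≥ m + 2`. -/
theorem cayley_bacharach_count_bound
    (K : Type*) [Field K] (n m k : ℕ) (hn : 1 ≤ n) (hm : 1 ≤ m) (hk : 1 ≤ k)
    (v : Fin k → (Fin (n + 1) → K))
    (hv0 : ∀ i, v i ≠ 0)
    (hdist : ∀ i j, i ≠ j → ∀ c : K, v j ≠ c • v i)
    (hCB : ∀ F : MvPolynomial (Fin (n + 1)) K, F.IsHomogeneous m →
      ∀ i : Fin k, (∀ j, j ≠ i → MvPolynomial.eval (v j) F = 0) →
        MvPolynomial.eval (v i) F = 0) :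
    k ≥ m + 2 :=
  cayley_bacharach_count_bound_general K n m k hk v hv0 hdist hCB
end

section
/- Let n ≥ 1 and m ≥ 1 be integers and let P₁,…,P_k (with k ≥ 1) be distinct points of the projective space ℙⁿ over ℂ satisfying the Cayley–Bacharach condition with respect to homogeneous forms of degree m. If k ≤ 2m + 1, then the points lie on a line in ℙⁿ: representative vectors v₁,…,v_k ∈ ℂ^{n+1} of the points span a linear subspace of ℂ^{n+1} of dimension at most 2. -/
/-!
Multiplying by a linear form `ℓ` turns the Cayley–Bacharach condition in degree `d + 1` on a set `Γ`
into the condition in degree `d` on the points of `Γ` off the hyperplane `ℓ = 0`. Cutting off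
all but one point by products of linear forms then shows that a nonempty set satisfying the
condition in degree `m` has at least `m + 2` points.

Induct on `m`. If `Γ` has at most `2m + 3` points, satisfies the condition in degree `m + 1` and
is not on a line, cutting off a hyperplane through two of its points leaves, by induction, at least
`m + 2` points on a line `L`; cutting off a hyperplane through `L` instead leaves a nonempty set
of at most `m + 1` points satisfying the condition in degree `m`, which is impossible.
-/

open MvPolynomial Module Submodule

theorem exists_linearForm_of_notMem {K σ : Type*} [Field K] [Fintype σ]
    {W : Submodule K (σ → K)} {x : σ → K} (hx : x ∉ W) :
    ∃ L : MvPolynomial σ K, L.IsHomogeneous 1 ∧ eval x L ≠ 0 ∧ ∀ w ∈ W, eval w L = 0 := by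
  classical
  obtain ⟨φ, hφx, hφW⟩ := exists_dual_map_eq_bot_of_notMem hx inferInstance
  have eval_L (y : σ → K) : eval y (∑ i, C (φ fun j => if i = j then 1 else 0) * X i) = φ y := by
    simp [LinearMap.pi_apply_eq_sum_univ φ y, mul_comm]
  refine ⟨∑ i, C (φ fun j => if i = j then 1 else 0) * X i,
    .sum _ _ _ fun _ _ => isHomogeneous_C_mul_X _ _, by rwa [eval_L], fun w hw => ?_⟩
  rw [eval_L, ← Submodule.mem_bot K, ← hφW]
  exact mem_map_of_mem hw

def IsCayleyBacharach {K σ ι : Type*} [Field K] (v : ι → σ → K) (s : Finset ι) (m : ℕ) : Prop :=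
  ∀ F : MvPolynomial σ K, F.IsHomogeneous m →
    ∀ i ∈ s, (∀ j ∈ s, j ≠ i → eval (v j) F = 0) → eval (v i) F = 0

namespace IsCayleyBacharach

variable {K σ ι : Type*} [Field K] {v : ι → σ → K} {s : Finset ι} {m : ℕ}

theorem restrict {t : Finset ι} {d : ℕ} (h : IsCayleyBacharach v s (d + m))
    {G : MvPolynomial σ K} (hG : G.IsHomogeneous d) (hts : t ⊆ s)
    (hGt : ∀ j ∈ t, eval (v j) G ≠ 0) (hGs : ∀ j ∈ s, j ∉ t → eval (v j) G = 0) :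
    IsCayleyBacharach v t m := by
  intro F hF i hi hvanish
  have hGF := h (G * F) (hG.mul hF) i (hts hi) fun j hj hji => by
    by_cases hjt : j ∈ t
    · simp [hvanish j hjt hji]
    · simp [hGs j hj hjt]
  simpa [hGt i hi] using hGF

variable [Fintype σ]

theorem not_singleton {i : ι} (hv : v i ≠ 0) : ¬IsCayleyBacharach v {i} m := by
  intro h
  obtain ⟨L, hL, hLv, -⟩ :=
    exists_linearForm_of_notMem (W := ⊥) (x := v i) (by rwa [mem_bot])
  have := h (L ^ m) (by simpa using hL.pow m) i (Finset.mem_singleton_self i)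
    fun j hj hji => absurd (Finset.mem_singleton.1 hj) hji
  simp_all

theorem add_two_le_card (hv0 : ∀ i, v i ≠ 0) (hdist : ∀ i j, i ≠ j → ∀ c : K, v j ≠ c • v i)
    (h : IsCayleyBacharach v s m) (hs : s.Nonempty) : m + 2 ≤ s.card := by
  classical
  obtain ⟨i, hi⟩ := hs
  by_contra! hcard
  have hsep : ∀ j ∈ s.erase i, ∃ L : MvPolynomial σ K,
      L.IsHomogeneous 1 ∧ eval (v i) L ≠ 0 ∧ eval (v j) L = 0 := fun j hj => by
    obtain ⟨L, hL, hLi, hLj⟩ := exists_linearForm_of_notMem (W := span K {v j}) (x := v i) <| by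
      rw [mem_span_singleton]
      rintro ⟨c, hc⟩
      exact hdist j i (Finset.ne_of_mem_erase hj) c hc.symm
    exact ⟨L, hL, hLi, hLj _ (mem_span_singleton_self _)⟩
  choose! L hL hLi hLj using hsep
  have hd : (s.erase i).card ≤ m := by rw [Finset.card_erase_of_mem hi]; omega
  have hG : (∏ j ∈ s.erase i, L j).IsHomogeneous (s.erase i).card := by
    simpa using IsHomogeneous.prod _ _ (fun _ => 1) hL
  rw [← Nat.add_sub_cancel' hd] at h
  refine not_singleton (hv0 i) (h.restrict hG (Finset.singleton_subset_iff.2 hi) ?_ ?_)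
  · simpa [Finset.prod_ne_zero_iff] using hLi
  · intro j hj hji
    have hj' : j ∈ s.erase i := Finset.mem_erase.2 ⟨Finset.notMem_singleton.1 hji, hj⟩
    rw [map_prod]
    exact Finset.prod_eq_zero hj' (hLj j hj')

theorem exists_subset_avoiding (h : IsCayleyBacharach v s (m + 1)) {W : Submodule K (σ → K)}
    {r : ι} (hr : r ∈ s) (hrW : v r ∉ W) :
    ∃ t ⊆ s, r ∈ t ∧ (∀ j ∈ t, v j ∉ W) ∧ IsCayleyBacharach v t m := by
  classical
  obtain ⟨L, hL, hLr, hLW⟩ := exists_linearForm_of_notMem hrW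
  refine ⟨s.filter fun j => eval (v j) L ≠ 0, Finset.filter_subset _ _,
    Finset.mem_filter.2 ⟨hr, hLr⟩, fun j hj hjW => (Finset.mem_filter.1 hj).2 (hLW _ hjW), ?_⟩
  rw [add_comm] at h
  exact h.restrict hL (Finset.filter_subset _ _) (fun j hj => (Finset.mem_filter.1 hj).2)
    fun j hj hjt => by simpa [hj] using hjt

theorem finrank_span_le_two (hv0 : ∀ i, v i ≠ 0)
    (hdist : ∀ i j, i ≠ j → ∀ c : K, v j ≠ c • v i)
    (h : IsCayleyBacharach v s m) (hs : s.card ≤ 2 * m + 1) :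
    finrank K (span K (v '' s)) ≤ 2 := by
  classical
  have hle_card : ∀ t : Finset ι, finrank K (span K (v '' t)) ≤ t.card := fun t => by
    rw [← Finset.coe_image]
    exact (finrank_span_finset_le_card (t.image v)).trans Finset.card_image_le
  induction m generalizing s with
  | zero => exact (hle_card s).trans (by omega)
  | succ m ih =>
    by_contra! hbig
    have hout : ∀ W : Submodule K (σ → K), finrank K W ≤ 2 → ∃ r ∈ s, v r ∉ W := by
      intro W hW
      by_contra! hall
      have := finrank_mono (span_le.2 (Set.image_subset_iff.2 hall) : span K (v '' s) ≤ W)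
      omega
    obtain ⟨p, hp, q, hq, hpq⟩ := (Finset.one_lt_card (s := s)).1 (by have := hle_card s; omega)
    obtain ⟨r, hr, hrW⟩ :=
      hout (span K (v '' ({p, q} : Finset ι))) ((hle_card _).trans Finset.card_le_two)
    obtain ⟨t₁, ht₁s, hrt₁, ht₁W, ht₁⟩ := h.exists_subset_avoiding hr hrW
    have ht₁card : t₁.card ≤ 2 * m + 1 := by
      have hsub : t₁ ⊆ (s.erase p).erase q := fun j hj => by
        have hW := ht₁W j hj
        simp only [Finset.mem_erase]
        refine ⟨?_, ?_, ht₁s hj⟩ <;> rintro rfl <;> exact hW (subset_span (by simp))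
      have := Finset.card_le_card hsub
      rw [Finset.card_erase_of_mem (Finset.mem_erase.2 ⟨hpq.symm, hq⟩),
        Finset.card_erase_of_mem hp] at this
      omega
    obtain ⟨r', hr', hr'W⟩ := hout _ (ih ht₁ ht₁card)
    obtain ⟨t₂, ht₂s, hr't₂, ht₂W, ht₂⟩ := h.exists_subset_avoiding hr' hr'W
    have hdisj : Disjoint t₁ t₂ := Finset.disjoint_left.2 fun j hj₁ hj₂ =>
      ht₂W j hj₂ (subset_span (Set.mem_image_of_mem v hj₁))
    have := Finset.card_le_card (Finset.union_subset ht₁s ht₂s)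
    rw [Finset.card_union_of_disjoint hdisj] at this
    have := ht₁.add_two_le_card hv0 hdist ⟨r, hrt₁⟩
    have := ht₂.add_two_le_card hv0 hdist ⟨r', hr't₂⟩
    omega

end IsCayleyBacharach

theorem cayley_bacharach_collinear_general
    (n m k : ℕ)
    (v : Fin k → (Fin (n + 1) → ℂ))
    (hv0 : ∀ i, v i ≠ 0)
    (hdist : ∀ i j, i ≠ j → ∀ c : ℂ, v j ≠ c • v i)
    (hCB : ∀ F : MvPolynomial (Fin (n + 1)) ℂ, F.IsHomogeneous m →
      ∀ i : Fin k, (∀ j, j ≠ i → MvPolynomial.eval (v j) F = 0) →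
        MvPolynomial.eval (v i) F = 0)
    (hkm : k ≤ 2 * m + 1) :
    Module.finrank ℂ ↥(Submodule.span ℂ (Set.range v)) ≤ 2 := by
  have h : IsCayleyBacharach v Finset.univ m := fun F hF i _ hvanish =>
    hCB F hF i fun j hji => hvanish j (Finset.mem_univ j) hji
  have := h.finrank_span_le_two hv0 hdist (by simpa using hkm)
  rwa [Finset.coe_univ, Set.image_univ] at this

/-- **Cayley–Bacharach collinearity lemma.**
Let `P₁,…,P_k` be distinct points of ℙⁿ over ℂ (represented by nonzero, pairwise
non-proportional vectors `v i ∈ ℂ^{n+1}`) satisfying the Cayley–Bacharach condition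
with respect to homogeneous forms of degree `m ≥ 1`.  If `k ≤ 2m + 1`, then the
points lie on a line of ℙⁿ: the vectors `v i` span a subspace of `ℂ^{n+1}` of
dimension at most 2. -/
theorem cayley_bacharach_collinear
    (n m k : ℕ) (hn : 1 ≤ n) (hm : 1 ≤ m) (hk : 1 ≤ k)
    (v : Fin k → (Fin (n + 1) → ℂ))
    (hv0 : ∀ i, v i ≠ 0)
    (hdist : ∀ i j, i ≠ j → ∀ c : ℂ, v j ≠ c • v i)
    (hCB : ∀ F : MvPolynomial (Fin (n + 1)) ℂ, F.IsHomogeneous m →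
      ∀ i : Fin k, (∀ j, j ≠ i → MvPolynomial.eval (v j) F = 0) →
        MvPolynomial.eval (v i) F = 0)
    (hkm : k ≤ 2 * m + 1) :
    Module.finrank ℂ ↥(Submodule.span ℂ (Set.range v)) ≤ 2 :=
  cayley_bacharach_collinear_general n m k v hv0 hdist hCB hkm
end

section
/- Let K be a field, let k ≥ 1 be an integer, and let P₁,…,P_c (with c ≥ 1) be distinct points of ℙ^p × ℙ^q over K satisfying the Cayley–Bacharach condition with respect to bihomogeneous forms of bidegree (k,k). Then c ≥ k + 2. -/
/-!
If `c ≤ k + 1`, pick one of the points, `P`. Each of the other `c - 1 ≤ k` points `Q` differs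
from `P` in one of the two factors, so some product `f(x) g(y)` of linear forms vanishes at `Q`
but not at `P`. Multiplying these `c - 1` forms of bidegree `(1, 1)`, and padding with a power of
a `(1, 1)`-form not vanishing at `P`, gives a form of bidegree `(k, k)` which vanishes at every
point except `P`, against the Cayley–Bacharach condition.
-/

/-- A polynomial in the variables `x₀,…,x_p` (indexed by `Sum.inl`) and `y₀,…,y_q`
(indexed by `Sum.inr`) is bihomogeneous of bidegree `(d, e)` if it is weighted
homogeneous of degree `d` for the weight giving `1` to each `x`-variable and `0` to
each `y`-variable, and weighted homogeneous of degree `e` for the opposite weight. -/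
def IsBihomogeneous {K : Type*} [CommSemiring K] {p q : ℕ}
    (F : MvPolynomial (Fin (p + 1) ⊕ Fin (q + 1)) K) (d e : ℕ) : Prop :=
  MvPolynomial.IsWeightedHomogeneous (Sum.elim (fun _ => (1 : ℕ)) (fun _ => 0)) F d ∧
  MvPolynomial.IsWeightedHomogeneous (Sum.elim (fun _ => (0 : ℕ)) (fun _ => 1)) F e

open MvPolynomial Finset

theorem Module.Dual.exists_apply_ne_zero_apply_eq_zero {K V : Type*} [Field K] [AddCommGroup V]
    [Module K V] {v v' : V} (hv : v ≠ 0) (h : ¬∃ a : K, v' = a • v) :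
    ∃ f : Module.Dual K V, f v ≠ 0 ∧ f v' = 0 := by
  have hv' : v ∉ K ∙ v' := by
    intro hmem
    obtain ⟨b, rfl⟩ := Submodule.mem_span_singleton.1 hmem
    have hb : b ≠ 0 := by rintro rfl; simp at hv
    exact h ⟨b⁻¹, by rw [smul_smul, inv_mul_cancel₀ hb, one_smul]⟩
  obtain ⟨f, hfv, hker⟩ := Submodule.exists_le_ker_of_notMem hv'
  exact ⟨f, hfv, hker (Submodule.mem_span_singleton_self v')⟩

section LinearForm

variable {R σ ι : Type*} [CommSemiring R] [Fintype σ] [DecidableEq σ]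

noncomputable def linearFormPoly (f : Module.Dual R (σ → R)) (e : σ → ι) :
    MvPolynomial ι R :=
  ∑ m, C (f (Pi.single m 1)) * X (e m)

theorem eval_linearFormPoly (f : Module.Dual R (σ → R)) (e : σ → ι) (x : ι → R) :
    eval x (linearFormPoly f e) = f (x ∘ e) := by
  conv_rhs => rw [pi_eq_sum_univ' (x ∘ e), map_sum]
  simp [linearFormPoly, mul_comm]

theorem isWeightedHomogeneous_linearFormPoly {M : Type*} [AddCommMonoid M] {w : ι → M}
    {d : M} (f : Module.Dual R (σ → R)) {e : σ → ι} (hw : ∀ m, w (e m) = d) :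
    IsWeightedHomogeneous w (linearFormPoly f e) d :=
  IsWeightedHomogeneous.sum _ _ _ fun m _ =>
    hw m ▸ (isWeightedHomogeneous_X R w (e m)).C_mul _

end LinearForm

section Bihomogeneous

variable {K : Type*} {p q : ℕ}

theorem IsBihomogeneous.mul [CommSemiring K] {F G : MvPolynomial (Fin (p + 1) ⊕ Fin (q + 1)) K}
    {d e d' e' : ℕ} (hF : IsBihomogeneous F d e) (hG : IsBihomogeneous G d' e') :
    IsBihomogeneous (F * G) (d + d') (e + e') :=
  ⟨hF.1.mul hG.1, hF.2.mul hG.2⟩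

theorem IsBihomogeneous.pow [CommSemiring K] {F : MvPolynomial (Fin (p + 1) ⊕ Fin (q + 1)) K}
    {d e : ℕ} (hF : IsBihomogeneous F d e) (n : ℕ) :
    IsBihomogeneous (F ^ n) (n * d) (n * e) :=
  ⟨hF.1.pow n, hF.2.pow n⟩

noncomputable def bilinearFormPoly [CommSemiring K] (f : Module.Dual K (Fin (p + 1) → K))
    (g : Module.Dual K (Fin (q + 1) → K)) : MvPolynomial (Fin (p + 1) ⊕ Fin (q + 1)) K :=
  linearFormPoly f Sum.inl * linearFormPoly g Sum.inr

theorem eval_bilinearFormPoly [CommSemiring K] (f : Module.Dual K (Fin (p + 1) → K))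
    (g : Module.Dual K (Fin (q + 1) → K)) (a : Fin (p + 1) → K) (b : Fin (q + 1) → K) :
    eval (Sum.elim a b) (bilinearFormPoly f g) = f a * g b := by
  simp [bilinearFormPoly, eval_linearFormPoly]

theorem isBihomogeneous_bilinearFormPoly [CommSemiring K] (f : Module.Dual K (Fin (p + 1) → K))
    (g : Module.Dual K (Fin (q + 1) → K)) : IsBihomogeneous (bilinearFormPoly f g) 1 1 :=
  ⟨(isWeightedHomogeneous_linearFormPoly (e := Sum.inl) (d := 1) f fun _ => rfl).mul
      (isWeightedHomogeneous_linearFormPoly (e := Sum.inr) (d := 0) g fun _ => rfl),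
    (isWeightedHomogeneous_linearFormPoly (e := Sum.inl) (d := 0) f fun _ => rfl).mul
      (isWeightedHomogeneous_linearFormPoly (e := Sum.inr) (d := 1) g fun _ => rfl)⟩

variable [Field K] {a a' : Fin (p + 1) → K} {b b' : Fin (q + 1) → K}

theorem exists_isBihomogeneous_one_one_eval_ne_zero (ha : a ≠ 0) (hb : b ≠ 0) :
    ∃ G : MvPolynomial (Fin (p + 1) ⊕ Fin (q + 1)) K,
      IsBihomogeneous G 1 1 ∧ eval (Sum.elim a b) G ≠ 0 := by
  obtain ⟨f, hf⟩ := Module.Projective.exists_dual_ne_zero K ha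
  obtain ⟨g, hg⟩ := Module.Projective.exists_dual_ne_zero K hb
  exact ⟨bilinearFormPoly f g, isBihomogeneous_bilinearFormPoly f g,
    by rw [eval_bilinearFormPoly]; exact mul_ne_zero hf hg⟩

theorem exists_isBihomogeneous_one_one_separating (ha : a ≠ 0) (hb : b ≠ 0)
    (h : ¬((∃ t : K, a' = t • a) ∧ (∃ t : K, b' = t • b))) :
    ∃ G : MvPolynomial (Fin (p + 1) ⊕ Fin (q + 1)) K, IsBihomogeneous G 1 1 ∧
      eval (Sum.elim a b) G ≠ 0 ∧ eval (Sum.elim a' b') G = 0 := by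
  rcases not_and_or.1 h with ha' | hb'
  · obtain ⟨f, hfa, hfa'⟩ := Module.Dual.exists_apply_ne_zero_apply_eq_zero ha ha'
    obtain ⟨g, hg⟩ := Module.Projective.exists_dual_ne_zero K hb
    exact ⟨bilinearFormPoly f g, isBihomogeneous_bilinearFormPoly f g,
      by rw [eval_bilinearFormPoly]; exact mul_ne_zero hfa hg,
      by rw [eval_bilinearFormPoly, hfa', zero_mul]⟩
  · obtain ⟨f, hf⟩ := Module.Projective.exists_dual_ne_zero K ha
    obtain ⟨g, hgb, hgb'⟩ := Module.Dual.exists_apply_ne_zero_apply_eq_zero hb hb'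
    exact ⟨bilinearFormPoly f g, isBihomogeneous_bilinearFormPoly f g,
      by rw [eval_bilinearFormPoly]; exact mul_ne_zero hf hgb,
      by rw [eval_bilinearFormPoly, hgb', mul_zero]⟩

theorem exists_isBihomogeneous_eval_ne_zero_vanishing {ι : Type*} [DecidableEq ι]
    (u : ι → Fin (p + 1) → K) (w : ι → Fin (q + 1) → K) (ha : a ≠ 0) (hb : b ≠ 0)
    (s : Finset ι)
    (hs : ∀ j ∈ s, ¬((∃ t : K, u j = t • a) ∧ (∃ t : K, w j = t • b)))
    {k : ℕ} (hk : #s ≤ k) :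
    ∃ F : MvPolynomial (Fin (p + 1) ⊕ Fin (q + 1)) K, IsBihomogeneous F k k ∧
      eval (Sum.elim a b) F ≠ 0 ∧ ∀ j ∈ s, eval (Sum.elim (u j) (w j)) F = 0 := by
  induction s using Finset.induction_on generalizing k with
  | empty =>
    obtain ⟨M, hM, hMab⟩ := exists_isBihomogeneous_one_one_eval_ne_zero ha hb
    refine ⟨M ^ k, by simpa using hM.pow k, by simpa using pow_ne_zero k hMab, by simp⟩
  | insert j s hj ih =>
    rw [card_insert_of_notMem hj] at hk
    obtain ⟨k, rfl⟩ : ∃ k', k = k' + 1 := Nat.exists_eq_add_one.2 (by omega)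
    obtain ⟨F, hF, hFab, hFs⟩ :=
      ih (fun i hi => hs i (mem_insert_of_mem hi)) (k := k) (by omega)
    obtain ⟨G, hG, hGab, hGj⟩ :=
      exists_isBihomogeneous_one_one_separating ha hb (hs j (mem_insert_self j s))
    refine ⟨F * G, hF.mul hG, by rw [map_mul]; exact mul_ne_zero hFab hGab, ?_⟩
    intro i hi
    rcases mem_insert.1 hi with rfl | hi
    · rw [map_mul, hGj, mul_zero]
    · rw [map_mul, hFs i hi, zero_mul]

end Bihomogeneous

theorem cayley_bacharach_count_bound_product_general
    (K : Type*) [Field K] (p q k c : ℕ) (hc : 1 ≤ c)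
    (u : Fin c → (Fin (p + 1) → K)) (w : Fin c → (Fin (q + 1) → K))
    (hu0 : ∀ i, u i ≠ 0) (hw0 : ∀ i, w i ≠ 0)
    (hdist : ∀ i j, i ≠ j →
      ¬ ((∃ a : K, u j = a • u i) ∧ (∃ b : K, w j = b • w i)))
    (hCB : ∀ F : MvPolynomial (Fin (p + 1) ⊕ Fin (q + 1)) K, IsBihomogeneous F k k →
      ∀ i : Fin c, (∀ j, j ≠ i → MvPolynomial.eval (Sum.elim (u j) (w j)) F = 0) →
        MvPolynomial.eval (Sum.elim (u i) (w i)) F = 0) :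
    c ≥ k + 2 := by
  by_contra! hck
  let i : Fin c := ⟨0, hc⟩
  obtain ⟨F, hF, hFi, hFvanish⟩ :=
    exists_isBihomogeneous_eval_ne_zero_vanishing u w (hu0 i) (hw0 i) (univ.erase i)
      (fun j hj => hdist i j (ne_of_mem_erase hj).symm) (k := k)
      (by rw [card_erase_of_mem (mem_univ i), card_univ, Fintype.card_fin]; omega)
  exact hFi (hCB F hF i fun j hj => hFvanish j (mem_erase.2 ⟨hj, mem_univ j⟩))

/-- **Cayley–Bacharach count bound in a product of projective spaces.**
If `c ≥ 1` distinct points of `ℙ^p × ℙ^q` over a field `K` (represented by pairs of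
nonzero vectors `(u i, w i)`, two points being distinct iff the pairs are not
componentwise proportional) satisfy the Cayley–Bacharach condition with respect to
bihomogeneous forms of bidegree `(k, k)` with `k ≥ 1`, then `c ≥ k + 2`. -/
theorem cayley_bacharach_count_bound_product
    (K : Type*) [Field K] (p q k c : ℕ) (hk : 1 ≤ k) (hc : 1 ≤ c)
    (u : Fin c → (Fin (p + 1) → K)) (w : Fin c → (Fin (q + 1) → K))
    (hu0 : ∀ i, u i ≠ 0) (hw0 : ∀ i, w i ≠ 0)
    (hdist : ∀ i j, i ≠ j →
      ¬ ((∃ a : K, u j = a • u i) ∧ (∃ b : K, w j = b • w i)))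
    (hCB : ∀ F : MvPolynomial (Fin (p + 1) ⊕ Fin (q + 1)) K, IsBihomogeneous F k k →
      ∀ i : Fin c, (∀ j, j ≠ i → MvPolynomial.eval (Sum.elim (u j) (w j)) F = 0) →
        MvPolynomial.eval (Sum.elim (u i) (w i)) F = 0) :
    c ≥ k + 2 :=
  cayley_bacharach_count_bound_product_general K p q k c hc u w hu0 hw0 hdist hCB
end
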